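/- arXiv:2509.09035 — 2 statements merged into one kernel-verified Lean document; each statement's English description precedes it below -/
import Mathlib

section
/- Let L, C, c ≥ 0 with c ≥ L(L+C)+C, let G and G′ be graphs, let G contain a graph H as a c-fat minor, and suppose there is an (L,C)-quasi-isometry from G to G′. Then G′ contains H as a minor. -/
open SimpleGraph

/-- The distance in `G` between two sets of vertices, as an extended natural
(`⊤` if no path exists). -/
noncomputable def setDist {V : Type} (G : SimpleGraph V) (X Y : Set V) : ℕ∞ :=
  ⨅ (x : X) (y : Y), G.edist x.1 y.1

/-- Incidence on `U(H) = V(H) ⊕ E(H)`: a vertex and an edge incident with it. -/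
def UIncident {W : Type} (H : SimpleGraph W) : (W ⊕ H.edgeSet) → (W ⊕ H.edgeSet) → Prop
  | Sum.inl v, Sum.inr e => v ∈ (e : Sym2 W)
  | Sum.inr e, Sum.inl v => v ∈ (e : Sym2 W)
  | _, _ => False

/-- `η` exhibits `H` as a `c`-fat minor of `G`. -/
def IsFatMinorVia {V W : Type} (G : SimpleGraph V) (H : SimpleGraph W) (c : ℕ)
    (η : (W ⊕ H.edgeSet) → Set V) : Prop :=
  (∀ x, (η x).Nonempty) ∧
  (∀ x, (G.induce (η x)).Connected) ∧
  (Pairwise fun x y => Disjoint (η x) (η y)) ∧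
  (∀ e : H.edgeSet, ∀ v : W, v ∈ (e : Sym2 W) →
    ∃ a ∈ η (Sum.inl v), ∃ b ∈ η (Sum.inr e), G.Adj a b) ∧
  (∀ x y, x ≠ y → ¬ UIncident H x y → (c : ℕ∞) < setDist G (η x) (η y))

/-- `G` contains `H` as a `c`-fat minor. -/
def HasFatMinor {V W : Type} (G : SimpleGraph V) (H : SimpleGraph W) (c : ℕ) : Prop :=
  ∃ η, IsFatMinorVia G H c η

/-- `G` contains `H` as a minor. -/
def HasMinor {V W : Type} (G : SimpleGraph V) (H : SimpleGraph W) : Prop :=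
  ∃ η : W → Set V, (∀ v, (η v).Nonempty) ∧ (∀ v, (G.induce (η v)).Connected) ∧
    (Pairwise fun u v => Disjoint (η u) (η v)) ∧
    ∀ u v, H.Adj u v → ∃ a ∈ η u, ∃ b ∈ η v, G.Adj a b

def QuasiIsometry {V W : Type} (G : SimpleGraph V) (H : SimpleGraph W) (L C : ℕ)
    (φ : V → W) : Prop :=
  (∀ u v, G.edist u v ≠ ⊤ → H.edist (φ u) (φ v) ≤ L * G.edist u v + C) ∧
  (∀ u v, H.edist (φ u) (φ v) ≠ ⊤ → G.edist u v ≤ L * H.edist (φ u) (φ v) + C) ∧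
  (∀ y, ∃ v, H.edist (φ v) y ≤ C)

/-!
Push the fat minor forward along `φ` and thicken. With `r = L + C`, adjacent vertices of `G` land
at distance at most `r`, so the `r / 2`-thickening `X x` of `φ '' η x` is connected; the lower
quasi-isometry bound and `c ≥ L * r + C` make `X x` and `X y` disjoint whenever `x, y ∈ U(H)` are
distinct and not incident. For an edge `e = th`, a walk from `X t` to `X h` through `X e` is cut
just before it first enters `X h`; this corridor, added to `X t`, realises the edge. A corridor
meets only the regions of its tail and of its own edge, which keeps the new branch sets disjoint.
-/

namespace SimpleGraph

variable {V V' : Type} {G : SimpleGraph V} {G' : SimpleGraph V'}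

lemma exists_walk_of_induce_connected {s : Set V} (h : (G.induce s).Connected) {a b : V}
    (ha : a ∈ s) (hb : b ∈ s) : ∃ p : G.Walk a b, ∀ x ∈ p.support, x ∈ s := by
  obtain ⟨q⟩ := h.preconnected ⟨a, ha⟩ ⟨b, hb⟩
  refine ⟨q.map (Embedding.induce s).toHom, fun x hx => ?_⟩
  obtain ⟨y, -, rfl⟩ := List.mem_map.1 (Walk.support_map _ q ▸ hx)
  exact y.2

lemma induce_connected_of_forall_walk {s : Set V} {u : V} (hu : u ∈ s)
    (h : ∀ v ∈ s, ∃ p : G.Walk u v, ∀ x ∈ p.support, x ∈ s) : (G.induce s).Connected := by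
  refine (connected_iff_exists_forall_reachable _).2 ⟨⟨u, hu⟩, fun ⟨v, hv⟩ => ?_⟩
  obtain ⟨p, hp⟩ := h v hv
  exact (p.induce s hp).reachable

lemma Walk.edist_add_edist_le_length {u v x : V} (p : G.Walk u v) (hx : x ∈ p.support) :
    G.edist u x + G.edist x v ≤ p.length := by
  classical
  calc G.edist u x + G.edist x v
      ≤ (p.takeUntil x hx).length + (p.dropUntil x hx).length :=
        add_le_add (edist_le _) (edist_le _)
    _ = p.length := by rw [← Nat.cast_add, ← Walk.length_append, Walk.take_spec]

def cthickening (G : SimpleGraph V) (ρ : ℕ) (S : Set V) : Set V :=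
  {y | ∃ x ∈ S, G.edist x y ≤ ρ}

lemma self_subset_cthickening (ρ : ℕ) (S : Set V) : S ⊆ G.cthickening ρ S :=
  fun x hx => ⟨x, hx, by simp [edist_self]⟩

lemma cthickening_mono {ρ : ℕ} {S T : Set V} (h : S ⊆ T) :
    G.cthickening ρ S ⊆ G.cthickening ρ T :=
  fun _ ⟨x, hx, hxy⟩ => ⟨x, h hx, hxy⟩

lemma cthickening_union (ρ : ℕ) (S T : Set V) :
    G.cthickening ρ (S ∪ T) = G.cthickening ρ S ∪ G.cthickening ρ T := by
  ext y
  simp only [cthickening, Set.mem_union, Set.mem_ofPred_eq, or_and_right, exists_or]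

lemma disjoint_cthickening {ρ : ℕ} {S T : Set V}
    (h : ∀ a ∈ S, ∀ b ∈ T, ((ρ + ρ : ℕ) : ℕ∞) < G.edist a b) :
    Disjoint (G.cthickening ρ S) (G.cthickening ρ T) := by
  refine Set.disjoint_left.2 fun y ⟨a, ha, hay⟩ ⟨b, hb, hby⟩ => (h a ha b hb).not_ge ?_
  calc G.edist a b ≤ G.edist a y + G.edist y b := G.edist_triangle
    _ ≤ ρ + ρ := add_le_add hay (edist_comm ▸ hby)
    _ = ((ρ + ρ : ℕ) : ℕ∞) := by push_cast; rfl

lemma exists_walk_support_subset_cthickening_singleton {ρ : ℕ} {u v : V}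
    (h : G.edist u v ≤ ρ) : ∃ p : G.Walk u v, ∀ y ∈ p.support, y ∈ G.cthickening ρ {u} := by
  obtain ⟨p, hp⟩ := exists_walk_of_edist_ne_top (ne_top_of_le_ne_top (ENat.natCast_ne_top ρ) h)
  refine ⟨p, fun y hy => ⟨u, rfl, ?_⟩⟩
  calc G.edist u y ≤ G.edist u y + G.edist y v := le_self_add
    _ ≤ p.length := p.edist_add_edist_le_length hy
    _ ≤ ρ := hp ▸ h

lemma exists_walk_support_subset_cthickening_pair {r : ℕ} {u v : V}
    (h : G.edist u v ≤ r) :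
    ∃ p : G.Walk u v, ∀ y ∈ p.support, y ∈ G.cthickening (r / 2) {u, v} := by
  obtain ⟨p, hp⟩ := exists_walk_of_edist_ne_top (ne_top_of_le_ne_top (ENat.natCast_ne_top r) h)
  refine ⟨p, fun y hy => ?_⟩
  have hsum : G.edist u y + G.edist y v ≤ r := hp ▸ p.edist_add_edist_le_length hy |>.trans h
  lift G.edist u y to ℕ using ne_top_of_le_ne_top (ENat.natCast_ne_top r) (le_self_add.trans hsum)
    with a ha
  lift G.edist y v to ℕ using ne_top_of_le_ne_top (ENat.natCast_ne_top r) (le_add_self.trans hsum)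
    with b hb
  norm_cast at hsum
  by_cases hau : a ≤ r / 2
  · exact ⟨u, by simp, ha ▸ by exact_mod_cast hau⟩
  · exact ⟨v, by simp, edist_comm ▸ hb ▸ by exact_mod_cast (by omega : b ≤ r / 2)⟩

lemma Walk.exists_walk_support_subset_cthickening_image {φ : V → V'} {r : ℕ}
    (hφ : ∀ a b, G.Adj a b → G'.edist (φ a) (φ b) ≤ r) {a b : V} (p : G.Walk a b) :
    ∃ q : G'.Walk (φ a) (φ b),
      ∀ y ∈ q.support, y ∈ G'.cthickening (r / 2) (φ '' {x | x ∈ p.support}) := by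
  induction p with
  | nil => exact ⟨Walk.nil, by simpa using self_subset_cthickening (G := G') (r / 2) {φ _} rfl⟩
  | @cons a a' b h p ih =>
    obtain ⟨q, hq⟩ := ih
    obtain ⟨w, hw⟩ := exists_walk_support_subset_cthickening_pair (hφ a a' h)
    refine ⟨w.append q, fun y hy => ?_⟩
    rcases (Walk.mem_support_append_iff _ _).1 hy with hy | hy
    · refine cthickening_mono ?_ (hw y hy)
      rintro _ (rfl | rfl) <;> exact Set.mem_image_of_mem φ (by simp)
    · exact cthickening_mono (Set.image_mono fun x (hx : x ∈ p.support) => by simp [hx]) (hq y hy)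

lemma induce_connected_cthickening_image {φ : V → V'} {r : ℕ}
    (hφ : ∀ a b, G.Adj a b → G'.edist (φ a) (φ b) ≤ r) {S : Set V}
    (hS : (G.induce S).Connected) :
    (G'.induce (G'.cthickening (r / 2) (φ '' S))).Connected := by
  obtain ⟨⟨s, hs⟩⟩ := hS.nonempty
  refine induce_connected_of_forall_walk
    (self_subset_cthickening _ _ (Set.mem_image_of_mem φ hs)) fun y ⟨_, ⟨x, hx, rfl⟩, hxy⟩ => ?_
  obtain ⟨p, hp⟩ := exists_walk_of_induce_connected hS hs hx
  obtain ⟨q, hq⟩ := p.exists_walk_support_subset_cthickening_image hφ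
  obtain ⟨w, hw⟩ := exists_walk_support_subset_cthickening_singleton hxy
  refine ⟨q.append w, fun z hz => ?_⟩
  rcases (Walk.mem_support_append_iff _ _).1 hz with hz | hz
  · exact cthickening_mono (Set.image_mono hp) (hq z hz)
  · exact cthickening_mono (by simpa using Set.mem_image_of_mem φ hx) (hw z hz)

/-- The initial segment of a walk entering `S`, up to the vertex before its first visit to `S`. -/
lemma Walk.exists_connected_prefix_adj_of_notMem_of_mem {S : Set V} {u v : V}
    (p : G.Walk u v) (hu : u ∉ S) (hv : v ∈ S) :
    ∃ P : Set V, u ∈ P ∧ (∀ x ∈ P, x ∈ p.support) ∧ Disjoint P S ∧ (G.induce P).Connected ∧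
      ∃ a ∈ P, ∃ b ∈ S, G.Adj a b := by
  induction p with
  | nil => exact absurd hv hu
  | @cons u u' v h q ih =>
    have hsingle : (G.induce {u}).Connected := by
      rw [induce_singleton_eq_top]
      exact connected_top
    by_cases hu' : u' ∈ S
    · exact ⟨{u}, rfl, by simp, Set.disjoint_singleton_left.2 hu, hsingle, u, rfl, u', hu', h⟩
    obtain ⟨P, huP, hPq, hPS, hP, hadj⟩ := ih hu' hv
    refine ⟨{u} ∪ P, Or.inl rfl, ?_,
      Set.disjoint_union_left.2 ⟨Set.disjoint_singleton_left.2 hu, hPS⟩,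
      connected_induce_union hsingle.preconnected hP.preconnected rfl huP h, ?_⟩
    · rintro x (rfl | hx)
      · simp
      · simp [hPq x hx]
    · obtain ⟨a, ha, hb⟩ := hadj
      exact ⟨a, Or.inr ha, hb⟩

end SimpleGraph

section Corridors

variable {V' U : Type} {G' : SimpleGraph V'} {H : SimpleGraph U} {X : U ⊕ H.edgeSet → Set V'}
  {tail head : H.edgeSet → U} {P : H.edgeSet → Set V'}

/-- `X x` is the region of `G'` reserved for `x ∈ U(H)` (in the application, the thickened image
of the branch set `η x`). -/
structure IsCorridor (G' : SimpleGraph V') (X : U ⊕ H.edgeSet → Set V') (e : H.edgeSet)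
    (tail head : U) (P : Set V') : Prop where
  ends : (e : Sym2 U) = s(tail, head)
  connected : (G'.induce P).Connected
  subset : P ⊆ X (.inl tail) ∪ X (.inr e)
  disjoint_head : Disjoint P (X (.inl head))
  meets_tail : (P ∩ X (.inl tail)).Nonempty
  exists_adj_head : ∃ a ∈ P, ∃ b ∈ X (.inl head), G'.Adj a b

lemma IsCorridor.disjoint_of_ne_tail
    (hX : ∀ x y, x ≠ y → ¬ UIncident H x y → Disjoint (X x) (X y))
    {e : H.edgeSet} {t h z : U} {P : Set V'} (hP : IsCorridor G' X e t h P) (hz : z ≠ t) :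
    Disjoint P (X (.inl z)) := by
  by_cases hzh : z = h
  · exact hzh ▸ hP.disjoint_head
  refine Disjoint.mono_left hP.subset (Disjoint.union_left ?_ ?_)
  · exact hX _ _ (by simpa using hz.symm) id
  · refine hX _ _ Sum.inr_ne_inl fun hze => ?_
    have hze' : z ∈ s(t, h) := hP.ends ▸ hze
    rcases Sym2.mem_iff.1 hze' with rfl | rfl <;> contradiction

lemma IsCorridor.disjoint_of_ne
    (hX : ∀ x y, x ≠ y → ¬ UIncident H x y → Disjoint (X x) (X y))
    {e f : H.edgeSet} {t h t' h' : U} {P Q : Set V'}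
    (hP : IsCorridor G' X e t h P) (hQ : IsCorridor G' X f t' h' Q) (hef : e ≠ f) (ht : t ≠ t') :
    Disjoint P Q := by
  refine Set.disjoint_left.2 fun y hyP hyQ => ?_
  have hyt : y ∉ X (.inl t) := Set.disjoint_left.1 (hQ.disjoint_of_ne_tail hX ht) hyQ
  have hyt' : y ∉ X (.inl t') := Set.disjoint_left.1 (hP.disjoint_of_ne_tail hX ht.symm) hyP
  have hye : y ∈ X (.inr e) := (hP.subset hyP).resolve_left hyt
  have hyf : y ∈ X (.inr f) := (hQ.subset hyQ).resolve_left hyt'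
  exact Set.disjoint_left.1 (hX _ _ (by simpa using hef) id) hye hyf

variable (X tail P) in
def corridorBranchSet (w : U) : Set V' :=
  X (.inl w) ∪ ⋃ (e) (_ : tail e = w), P e

lemma pairwise_disjoint_corridorBranchSet
    (hX : ∀ x y, x ≠ y → ¬ UIncident H x y → Disjoint (X x) (X y))
    (hP : ∀ e, IsCorridor G' X e (tail e) (head e) (P e)) :
    Pairwise fun w w' =>
      Disjoint (corridorBranchSet X tail P w) (corridorBranchSet X tail P w') := by
  intro w w' hww'
  simp only [corridorBranchSet, Set.disjoint_union_left, Set.disjoint_union_right,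
    Set.disjoint_iUnion_left, Set.disjoint_iUnion_right]
  refine ⟨⟨hX _ _ (by simpa using hww') id, ?_⟩, fun f hf => ⟨?_, ?_⟩⟩
  · rintro e rfl
    exact (hP e).disjoint_of_ne_tail hX hww'.symm
  · exact ((hP f).disjoint_of_ne_tail hX (hf ▸ hww')).symm
  · rintro e rfl
    have ht : tail e ≠ tail f := hf ▸ hww'
    exact (hP e).disjoint_of_ne hX (hP f) (fun hef => ht (hef ▸ rfl)) ht

lemma induce_connected_corridorBranchSet
    (hXconn : ∀ w, (G'.induce (X (.inl w))).Connected)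
    (hP : ∀ e, IsCorridor G' X e (tail e) (head e) (P e)) (w : U) :
    (G'.induce (corridorBranchSet X tail P w)).Connected := by
  obtain ⟨⟨y₀, hy₀⟩⟩ := (hXconn w).nonempty
  refine induce_connected_of_patches y₀ (Or.inl hy₀) fun {y} hy => ?_
  simp only [corridorBranchSet, Set.mem_union, Set.mem_iUnion] at hy
  rcases hy with hy | ⟨e, rfl, hy⟩
  · exact ⟨X (.inl w), Set.subset_union_left, hy₀, hy, (hXconn w).preconnected _ _⟩
  · refine ⟨X (.inl (tail e)) ∪ P e, Set.union_subset_union_right _ ?_, Or.inl hy₀, Or.inr hy,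
      induce_union_connected (hXconn _).preconnected (hP e).connected.preconnected
        (Set.inter_comm _ _ ▸ (hP e).meets_tail) _ _⟩
    exact Set.subset_iUnion₂ (s := fun f (_ : tail f = tail e) => P f) e rfl

lemma hasMinor_of_isCorridor
    (hXconn : ∀ w, (G'.induce (X (.inl w))).Connected)
    (hX : ∀ x y, x ≠ y → ¬ UIncident H x y → Disjoint (X x) (X y))
    (hP : ∀ e, IsCorridor G' X e (tail e) (head e) (P e)) : HasMinor G' H := by
  have hPsub : ∀ e, P e ⊆ corridorBranchSet X tail P (tail e) :=
    fun e => Set.subset_union_of_subset_right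
      (Set.subset_iUnion₂ (s := fun f (_ : tail f = tail e) => P f) e rfl) _
  have hXsub : ∀ w, X (.inl w) ⊆ corridorBranchSet X tail P w := fun _ => Set.subset_union_left
  refine ⟨corridorBranchSet X tail P, fun w => ?_, induce_connected_corridorBranchSet hXconn hP,
    pairwise_disjoint_corridorBranchSet hX hP, fun u v huv => ?_⟩
  · obtain ⟨⟨y, hy⟩⟩ := (hXconn w).nonempty
    exact ⟨y, hXsub w hy⟩
  · let e : H.edgeSet := ⟨s(u, v), huv⟩
    obtain ⟨a, ha, b, hb, hab⟩ := (hP e).exists_adj_head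
    rcases Sym2.eq_iff.1 (hP e).ends with ⟨hu, hv⟩ | ⟨hu, hv⟩
    · exact ⟨a, hu ▸ hPsub e ha, b, hv ▸ hXsub _ hb, hab⟩
    · exact ⟨b, hu ▸ hXsub _ hb, a, hv ▸ hPsub e ha, hab.symm⟩

end Corridors

section FatMinor

variable {V V' U : Type} {G : SimpleGraph V} {G' : SimpleGraph V'} {H : SimpleGraph U}

lemma QuasiIsometry.edist_le_of_adj {L C : ℕ} {φ : V → V'} (hφ : QuasiIsometry G G' L C φ)
    {a b : V} (h : G.Adj a b) : G'.edist (φ a) (φ b) ≤ (L + C : ℕ) := by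
  have hab : G.edist a b = 1 := edist_eq_one_iff_adj.2 h
  simpa [hab] using hφ.1 a b (by simp [hab])

lemma QuasiIsometry.edist_le_of_edist_image_le {L C s : ℕ} {φ : V → V'}
    (hφ : QuasiIsometry G G' L C φ) {a b : V} (h : G'.edist (φ a) (φ b) ≤ s) :
    G.edist a b ≤ (L * s + C : ℕ) := by
  calc G.edist a b ≤ L * G'.edist (φ a) (φ b) + C :=
        hφ.2.1 a b (ne_top_of_le_ne_top (ENat.natCast_ne_top s) h)
    _ ≤ L * s + C := by gcongr
    _ = (L * s + C : ℕ) := by push_cast; rfl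

lemma IsFatMinorVia.lt_edist {c : ℕ} {η : U ⊕ H.edgeSet → Set V} (hη : IsFatMinorVia G H c η)
    {x y : U ⊕ H.edgeSet} (hxy : x ≠ y) (hinc : ¬ UIncident H x y) {a b : V}
    (ha : a ∈ η x) (hb : b ∈ η y) : (c : ℕ∞) < G.edist a b :=
  (hη.2.2.2.2 x y hxy hinc).trans_le
    (iInf₂_le (f := fun (p : η x) (q : η y) => G.edist p.1 q.1) ⟨a, ha⟩ ⟨b, hb⟩)

lemma IsFatMinorVia.disjoint_cthickening_image {L C c : ℕ} (hc : L * (L + C) + C ≤ c)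
    {η : U ⊕ H.edgeSet → Set V} (hη : IsFatMinorVia G H c η) {φ : V → V'}
    (hφ : QuasiIsometry G G' L C φ) {x y : U ⊕ H.edgeSet} (hxy : x ≠ y)
    (hinc : ¬ UIncident H x y) :
    Disjoint (G'.cthickening ((L + C) / 2) (φ '' η x))
      (G'.cthickening ((L + C) / 2) (φ '' η y)) := by
  refine disjoint_cthickening ?_
  rintro _ ⟨a, ha, rfl⟩ _ ⟨b, hb, rfl⟩
  by_contra! hab
  have hr : (L + C) / 2 + (L + C) / 2 ≤ L + C := by omega
  have := hφ.edist_le_of_edist_image_le (hab.trans (by exact_mod_cast hr))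
  exact (hη.lt_edist hxy hinc ha hb).not_ge (this.trans (by exact_mod_cast hc))

lemma IsFatMinorVia.exists_isCorridor {c r : ℕ} {η : U ⊕ H.edgeSet → Set V}
    (hη : IsFatMinorVia G H c η) {φ : V → V'}
    (hφ : ∀ a b, G.Adj a b → G'.edist (φ a) (φ b) ≤ r)
    (hX : ∀ x y, x ≠ y → ¬ UIncident H x y →
      Disjoint (G'.cthickening (r / 2) (φ '' η x)) (G'.cthickening (r / 2) (φ '' η y)))
    (e : H.edgeSet) :
    ∃ t h P, IsCorridor G' (fun x => G'.cthickening (r / 2) (φ '' η x)) e t h P := by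
  set X := fun x => G'.cthickening (r / 2) (φ '' η x)
  obtain ⟨-, hconn, -, hattach, -⟩ := hη
  obtain ⟨t, h, hth⟩ : ∃ t h, (e : Sym2 U) = s(t, h) := Sym2.ind (fun x y => ⟨x, y, rfl⟩) e.1
  have hne : t ≠ h := (H.mem_edgeSet.1 (hth ▸ e.2)).ne
  obtain ⟨a₁, ha₁, b₁, hb₁, hab₁⟩ := hattach e t (hth ▸ Sym2.mem_mk_left t h)
  obtain ⟨a₂, ha₂, b₂, hb₂, hab₂⟩ := hattach e h (hth ▸ Sym2.mem_mk_right t h)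
  have hT : (G.induce (η (.inl t) ∪ η (.inr e) ∪ η (.inl h))).Connected :=
    connected_induce_union (connected_induce_union (hconn _).preconnected
      (hconn _).preconnected ha₁ hb₁ hab₁).preconnected (hconn _).preconnected
      (Or.inr hb₂) ha₂ hab₂.symm
  have hY : (G'.induce (X (.inl t) ∪ X (.inr e) ∪ X (.inl h))).Connected := by
    have := induce_connected_cthickening_image hφ hT
    rwa [Set.image_union, Set.image_union, cthickening_union, cthickening_union] at this
  have h₁ : φ a₁ ∈ X (.inl t) := self_subset_cthickening _ _ (Set.mem_image_of_mem φ ha₁)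
  have h₂ : φ a₂ ∈ X (.inl h) := self_subset_cthickening _ _ (Set.mem_image_of_mem φ ha₂)
  obtain ⟨Ω, hΩ⟩ := exists_walk_of_induce_connected hY (Or.inl (Or.inl h₁)) (Or.inr h₂)
  obtain ⟨P, hP₁, hPΩ, hPh, hPconn, hPadj⟩ := Ω.exists_connected_prefix_adj_of_notMem_of_mem
    (Set.disjoint_left.1 (hX _ _ (by simpa using hne) id) h₁) h₂
  refine ⟨t, h, P, hth, hPconn, fun y hy => ?_, hPh, ⟨φ a₁, hP₁, h₁⟩, hPadj⟩
  exact (hΩ y (hPΩ y hy)).resolve_right (Set.disjoint_left.1 hPh hy)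

end FatMinor

/-- if `c ≥ L(L+C)+C`, `G` contains `H` as a `c`-fat minor, and there is
an `(L,C)`-quasi-isometry from `G` to `G'`, then `G'` contains `H` as a minor. -/
theorem fatMinor_quasiIsometry_minor {V V' U : Type} (L C c : ℕ)
    (hc : L * (L + C) + C ≤ c)
    (G : SimpleGraph V) (G' : SimpleGraph V') (H : SimpleGraph U)
    (hfat : HasFatMinor G H c) (φ : V → V') (hφ : QuasiIsometry G G' L C φ) :
    HasMinor G' H := by
  obtain ⟨η, hη⟩ := hfat
  have hX := fun x y => hη.disjoint_cthickening_image hc hφ (x := x) (y := y)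
  choose tail head P hP using hη.exists_isCorridor (fun _ _ => hφ.edist_le_of_adj) hX
  exact hasMinor_of_isCorridor
    (fun w => induce_connected_cthickening_image (fun _ _ => hφ.edist_le_of_adj) (hη.2.1 _)) hX hP
end

section
/- Let G be a graph and let 𝒜 be a set of pairwise disjoint nonempty subsets of V(G), with union W, such that each A ∈ 𝒜 has quasi-bound at most (a,b). Suppose also that there is a line-decomposition of G[W] in which each bag is the union of at most k members of 𝒜. Then W has quasi-line-width at most ((k+1)a, b). -/
open SimpleGraph

/-- `X ⊆ V(G)` has quasi-size at most `(k,r)`: some set `Y` of at most `k` vertices has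
every vertex of `X` within distance `r` of it (distances in `G`). -/
def QuasiSize {V : Type} (G : SimpleGraph V) (X : Set V) (k r : ℕ) : Prop :=
  ∃ Y : Set V, Y.encard ≤ k ∧ ∀ x ∈ X, ∃ y ∈ Y, G.edist x y ≤ r

/-- `X ⊆ V(G)` has quasi-line-width at most `(k,r)`: the induced subgraph `G[X]` admits a
line-decomposition each of whose bags has quasi-size at most `(k,r)` in `G`. -/
def QuasiLineWidth {V : Type} (G : SimpleGraph V) (X : Set V) (k r : ℕ) : Prop :=
  ∃ (T : Type) (_ : LinearOrder T) (B : T → Set V),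
    (∀ t, B t ⊆ X) ∧
    (∀ v ∈ X, ∃ t, v ∈ B t) ∧
    (∀ u v, u ∈ X → v ∈ X → G.Adj u v → ∃ t, u ∈ B t ∧ v ∈ B t) ∧
    (∀ t₁ t₂ t₃ : T, t₁ < t₂ → t₂ < t₃ → B t₁ ∩ B t₃ ⊆ B t₂) ∧
    (∀ t, QuasiSize G (B t) k r)

/-- The boundary of `X`: the vertices of `X` with a neighbour outside `X`. -/
def bd {V : Type} (G : SimpleGraph V) (X : Set V) : Set V :=
  {v | v ∈ X ∧ ∃ u, u ∉ X ∧ G.Adj v u}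

/-- `X` has quasi-bound at most `(a,b)`: quasi-line-width at most `(a,b)` and the boundary
of `X` has quasi-size at most `(a,b)`. -/
def QuasiBound {V : Type} (G : SimpleGraph V) (X : Set V) (a b : ℕ) : Prop :=
  QuasiLineWidth G X a b ∧ QuasiSize G (bd G X) a b

/-! Refine the given decomposition of `G[W]` lexicographically. At a node `t` keep only the
boundary vertices of the parts inside `B t`; they are covered by the `k·a` centres of those
parts' boundaries. Anchor every part `A` at a node `t` with `A ⊆ B t` and splice in, right
after it, a decomposition of `A` whose bags are enlarged by the boundary vertices at `t`, which
costs `a` more centres (parts anchored at the same node are ordered arbitrarily). Edges between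
different parts join boundary vertices, so the boundary bags cover them; a boundary vertex
inherits the convexity of the outer decomposition, and an interior vertex occurs only inside
its own part's decomposition. -/

theorem Prod.Lex.exists_of_mem_Ioo_toLex {α β : Type*} [Preorder α] [Preorder β] {a : α}
    {b₁ b₃ : β} {x : α ×ₗ β} (hx : x ∈ Set.Ioo (toLex (a, b₁)) (toLex (a, b₃))) :
    ∃ b ∈ Set.Ioo b₁ b₃, x = toLex (a, b) := by
  obtain ⟨h₁, h₃⟩ := hx
  rw [Prod.Lex.lt_iff] at h₁ h₃
  rcases h₁ with h₁ | ⟨rfl, h₁⟩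
  · rcases h₃ with h₃ | ⟨h₃, -⟩
    · exact absurd (h₁.trans h₃) (lt_irrefl a)
    · exact (h₁.ne' h₃).elim
  · rcases h₃ with h₃ | ⟨-, h₃⟩
    · exact absurd h₃ (lt_irrefl _)
    · exact ⟨_, ⟨h₁, h₃⟩, rfl⟩

theorem WithBot.exists_of_mem_Ioo_coe {α : Type*} [Preorder α] {a c : α} {x : WithBot α}
    (hx : x ∈ Set.Ioo (a : WithBot α) c) : ∃ b ∈ Set.Ioo a c, x = b := by
  cases x with
  | bot => exact absurd hx.1 not_lt_bot
  | coe b => exact ⟨b, ⟨WithBot.coe_lt_coe.mp hx.1, WithBot.coe_lt_coe.mp hx.2⟩, rfl⟩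

theorem Sigma.Lex.exists_of_mem_Ioo_toLex {ι : Type*} [Preorder ι] {α : ι → Type*}
    [∀ i, Preorder (α i)] {i : ι} {a₁ a₃ : α i} {x : Σₗ i, α i}
    (hx : x ∈ Set.Ioo (toLex ⟨i, a₁⟩) (toLex ⟨i, a₃⟩)) :
    ∃ a ∈ Set.Ioo a₁ a₃, x = toLex ⟨i, a⟩ := by
  obtain ⟨h₁, h₃⟩ := hx
  obtain ⟨j, a⟩ := x
  change _root_.Sigma.Lex _ _ _ _ at h₁ h₃
  cases h₁ with
  | left _ _ hij =>
    cases h₃ with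
    | left _ _ hji => exact absurd (hij.trans hji) (lt_irrefl i)
    | right _ _ _ => exact absurd hij (lt_irrefl i)
  | right _ _ h₁ =>
    cases h₃ with
    | left _ _ hji => exact absurd hji (lt_irrefl i)
    | right _ _ h₃ => exact ⟨_, ⟨h₁, h₃⟩, rfl⟩

section LineDecomposition

variable {V : Type} {G : SimpleGraph V}

structure IsLineDecomposition {T : Type} [LinearOrder T] (G : SimpleGraph V) (X : Set V)
    (B : T → Set V) : Prop where
  subset : ∀ t, B t ⊆ X
  cover : ∀ v ∈ X, ∃ t, v ∈ B t
  edge : ∀ u v, u ∈ X → v ∈ X → G.Adj u v → ∃ t, u ∈ B t ∧ v ∈ B t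
  convex : ∀ t₁ t₂ t₃ : T, t₁ < t₂ → t₂ < t₃ → B t₁ ∩ B t₃ ⊆ B t₂

theorem quasiLineWidth_iff {X : Set V} {k r : ℕ} :
    QuasiLineWidth G X k r ↔ ∃ (T : Type) (_ : LinearOrder T) (B : T → Set V),
      IsLineDecomposition G X B ∧ ∀ t, QuasiSize G (B t) k r := by
  constructor
  · rintro ⟨T, _, B, h₁, h₂, h₃, h₄, h₅⟩
    exact ⟨T, _, B, ⟨h₁, h₂, h₃, h₄⟩, h₅⟩
  · rintro ⟨T, _, B, ⟨h₁, h₂, h₃, h₄⟩, h₅⟩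
    exact ⟨T, _, B, h₁, h₂, h₃, h₄, h₅⟩

theorem IsLineDecomposition.mem_of_le_of_le {T : Type} [LinearOrder T] {X : Set V}
    {B : T → Set V} (hB : IsLineDecomposition G X B) {t₁ t₂ t₃ : T} (h₁₂ : t₁ ≤ t₂)
    (h₂₃ : t₂ ≤ t₃) {v : V} (hv₁ : v ∈ B t₁) (hv₃ : v ∈ B t₃) : v ∈ B t₂ := by
  rcases h₁₂.eq_or_lt with rfl | h₁₂
  · exact hv₁
  rcases h₂₃.eq_or_lt with rfl | h₂₃
  · exact hv₃
  exact hB.convex t₁ t₂ t₃ h₁₂ h₂₃ ⟨hv₁, hv₃⟩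

theorem bd_subset (X : Set V) : bd G X ⊆ X := fun _ hv => hv.1

theorem QuasiSize.mono {X X' : Set V} {k k' r : ℕ} (h : QuasiSize G X k r) (hX : X' ⊆ X)
    (hk : k ≤ k') : QuasiSize G X' k' r := by
  obtain ⟨Y, hY, hXY⟩ := h
  exact ⟨Y, hY.trans (by exact_mod_cast hk), fun x hx => hXY x (hX hx)⟩

theorem QuasiSize.union {X X' : Set V} {k k' r : ℕ} (h : QuasiSize G X k r)
    (h' : QuasiSize G X' k' r) : QuasiSize G (X ∪ X') (k + k') r := by
  obtain ⟨Y, hY, hXY⟩ := h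
  obtain ⟨Y', hY', hXY'⟩ := h'
  refine ⟨Y ∪ Y', ?_, ?_⟩
  · calc (Y ∪ Y').encard ≤ Y.encard + Y'.encard := Set.encard_union_le Y Y'
      _ ≤ k + k' := add_le_add hY hY'
      _ = (k + k' : ℕ) := by push_cast; rfl
  · rintro x (hx | hx)
    · obtain ⟨y, hy, hxy⟩ := hXY x hx
      exact ⟨y, Or.inl hy, hxy⟩
    · obtain ⟨y, hy, hxy⟩ := hXY' x hx
      exact ⟨y, Or.inr hy, hxy⟩

theorem QuasiSize.biUnion {ι : Type*} {S : Set ι} {f : ι → Set V} {k r : ℕ} (hS : S.Finite)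
    (hf : ∀ i ∈ S, QuasiSize G (f i) k r) : QuasiSize G (⋃ i ∈ S, f i) (S.ncard * k) r := by
  induction S, hS using Set.Finite.induction_on with
  | empty => exact ⟨∅, by simp, by simp⟩
  | @insert i S hi hS ih =>
    rw [Set.biUnion_insert, Set.ncard_insert_of_notMem hi hS, add_one_mul, add_comm]
    exact (hf i (Set.mem_insert i S)).union (ih fun j hj => hf j (Set.mem_insert_of_mem i hj))

end LineDecomposition

section Composition

open Function

variable {V : Type} {G : SimpleGraph V} {T ι : Type} {Tι : ι → Type} {B : T → Set V}
  {P : ι → Set V} {anchor : ι → T} {C : ∀ i, Tι i → Set V}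

def composedBag (G : SimpleGraph V) (B : T → Set V) (P : ι → Set V) (anchor : ι → T)
    (C : ∀ i, Tι i → Set V) (x : T ×ₗ WithBot (Σₗ i, Tι i)) : Set V :=
  {v | v ∈ B (ofLex x).1 ∩ ⋃ i, bd G (P i) ∨
    ∃ i s, x = toLex (anchor i, ↑(toLex ⟨i, s⟩ : Σₗ i, Tι i)) ∧ v ∈ C i s}

theorem composedBag_subset [∀ i, LinearOrder (Tι i)] (hanchor : ∀ i, P i ⊆ B (anchor i))
    (hC : ∀ i, IsLineDecomposition G (P i) (C i)) (x : T ×ₗ WithBot (Σₗ i, Tι i)) :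
    composedBag G B P anchor C x ⊆ B (ofLex x).1 := by
  rintro v (hv | ⟨i, s, rfl, hv⟩)
  · exact hv.1
  · exact hanchor i ((hC i).subset s hv)

theorem isLineDecomposition_composedBag [LinearOrder T] [LinearOrder ι]
    [∀ i, LinearOrder (Tι i)] {W : Set V} (hB : IsLineDecomposition G W B)
    (hdisj : Pairwise (Disjoint on P)) (hW : W ⊆ ⋃ i, P i) (hanchor : ∀ i, P i ⊆ B (anchor i))
    (hC : ∀ i, IsLineDecomposition G (P i) (C i)) :
    IsLineDecomposition G W (composedBag G B P anchor C) where
  subset x := (composedBag_subset hanchor hC x).trans (hB.subset _)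
  cover v hv := by
    obtain ⟨i, hvi⟩ := Set.mem_iUnion.mp (hW hv)
    obtain ⟨s, hvs⟩ := (hC i).cover v hvi
    exact ⟨_, Or.inr ⟨i, s, rfl, hvs⟩⟩
  edge u v hu hv huv := by
    obtain ⟨i, hui⟩ := Set.mem_iUnion.mp (hW hu)
    obtain ⟨j, hvj⟩ := Set.mem_iUnion.mp (hW hv)
    obtain rfl | hij := eq_or_ne i j
    · obtain ⟨s, hus, hvs⟩ := (hC i).edge u v hui hvj huv
      exact ⟨_, Or.inr ⟨i, s, rfl, hus⟩, Or.inr ⟨i, s, rfl, hvs⟩⟩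
    · have hu_bd : u ∈ bd G (P i) := ⟨hui, v, Set.disjoint_right.mp (hdisj hij) hvj, huv⟩
      have hv_bd : v ∈ bd G (P j) := ⟨hvj, u, Set.disjoint_left.mp (hdisj hij) hui, huv.symm⟩
      obtain ⟨t, hut, hvt⟩ := hB.edge u v hu hv huv
      exact ⟨toLex (t, ⊥), Or.inl ⟨hut, Set.mem_iUnion_of_mem i hu_bd⟩,
        Or.inl ⟨hvt, Set.mem_iUnion_of_mem j hv_bd⟩⟩
  convex x₁ x₂ x₃ h₁₂ h₂₃ v := by
    rintro ⟨hv₁, hv₃⟩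
    by_cases hv : v ∈ ⋃ i, bd G (P i)
    · refine Or.inl ⟨hB.mem_of_le_of_le (Prod.Lex.monotone_fst _ _ h₁₂.le)
        (Prod.Lex.monotone_fst _ _ h₂₃.le) (composedBag_subset hanchor hC _ hv₁)
        (composedBag_subset hanchor hC _ hv₃), hv⟩
    -- an interior vertex of a part only lies in the bags of that part's own decomposition
    obtain ⟨i, s₁, rfl, hvs₁⟩ := hv₁.resolve_left fun h => hv h.2
    obtain ⟨j, s₃, rfl, hvs₃⟩ := hv₃.resolve_left fun h => hv h.2
    obtain rfl : i = j := by
      by_contra hij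
      exact Set.disjoint_left.mp (hdisj hij) ((hC i).subset s₁ hvs₁) ((hC j).subset s₃ hvs₃)
    obtain ⟨y, hy, rfl⟩ := Prod.Lex.exists_of_mem_Ioo_toLex ⟨h₁₂, h₂₃⟩
    obtain ⟨z, hz, rfl⟩ := WithBot.exists_of_mem_Ioo_coe hy
    obtain ⟨s₂, hs₂, rfl⟩ := Sigma.Lex.exists_of_mem_Ioo_toLex hz
    exact Or.inr ⟨i, s₂, rfl, (hC i).convex s₁ s₂ s₃ hs₂.1 hs₂.2 ⟨hvs₁, hvs₃⟩⟩

theorem quasiSize_composedBag {k l r : ℕ} (x : T ×ₗ WithBot (Σₗ i, Tι i))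
    (hU : QuasiSize G (B (ofLex x).1 ∩ ⋃ i, bd G (P i)) k r)
    (hC : ∀ i s, QuasiSize G (C i s) l r) :
    QuasiSize G (composedBag G B P anchor C x) (k + l) r := by
  by_cases hx : ∃ i s, x = toLex (anchor i, ↑(toLex ⟨i, s⟩ : Σₗ i, Tι i))
  · obtain ⟨i, s, rfl⟩ := hx
    refine (hU.union (hC i s)).mono ?_ le_rfl
    rintro v (hv | ⟨j, s', hj, hv⟩)
    · exact Or.inl hv
    · simp only [toLex_inj, Prod.mk.injEq, WithBot.coe_inj, Sigma.mk.inj_iff] at hj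
      obtain ⟨-, rfl, hs⟩ := hj
      cases hs
      exact Or.inr hv
  · refine hU.mono ?_ (Nat.le_add_right k l)
    rintro v (hv | ⟨i, s, hxi, -⟩)
    · exact hv
    · exact absurd ⟨i, s, hxi⟩ hx

theorem IsLineDecomposition.quasiLineWidth_of_parts [LinearOrder T] {W : Set V} {k l r : ℕ}
    (hB : IsLineDecomposition G W B) (hBbd : ∀ t, QuasiSize G (B t ∩ ⋃ i, bd G (P i)) k r)
    (hdisj : Pairwise (Disjoint on P)) (hW : W ⊆ ⋃ i, P i) (hanchor : ∀ i, ∃ t, P i ⊆ B t)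
    (hP : ∀ i, QuasiLineWidth G (P i) l r) : QuasiLineWidth G W (k + l) r := by
  choose anchor hanchor using hanchor
  choose Tι _ C hC hCl using fun i => quasiLineWidth_iff.mp (hP i)
  classical
  let _ : LinearOrder ι := linearOrderOfSTO WellOrderingRel
  exact quasiLineWidth_iff.mpr ⟨_, inferInstance, composedBag G B P anchor C,
    isLineDecomposition_composedBag hB hdisj hW hanchor hC,
    fun x => quasiSize_composedBag x (hBbd _) hCl⟩

end Composition

section SetSystem

variable {V : Type} {G : SimpleGraph V} {𝒜 S : Set (Set V)}

theorem subset_of_mem_of_eq_sUnion (hdisj : 𝒜.PairwiseDisjoint id) (hS : S ⊆ 𝒜) {A X : Set V}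
    (hX : X = ⋃₀ S) (hA : A ∈ 𝒜) {v : V} (hvA : v ∈ A) (hvX : v ∈ X) : A ⊆ X := by
  subst hX
  obtain ⟨A', hA'S, hvA'⟩ := hvX
  obtain rfl : A = A' := hdisj.elim_set hA (hS hA'S) v hvA hvA'
  exact Set.subset_sUnion_of_mem hA'S

theorem quasiSize_sUnion_inter_bd (hdisj : 𝒜.PairwiseDisjoint id) (hS : S ⊆ 𝒜) {k a r : ℕ}
    (hk : S.encard ≤ k) (hbd : ∀ A ∈ S, QuasiSize G (bd G A) a r) :
    QuasiSize G (⋃₀ S ∩ ⋃ A ∈ 𝒜, bd G A) (k * a) r := by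
  obtain ⟨hfin, hncard⟩ := Set.encard_le_coe_iff_finite_ncard_le.mp hk
  refine (QuasiSize.biUnion hfin hbd).mono ?_ (Nat.mul_le_mul_right a hncard)
  rintro v ⟨⟨A', hA'S, hvA'⟩, hv⟩
  obtain ⟨A, hA, hvA⟩ := Set.mem_iUnion₂.mp hv
  obtain rfl : A = A' := hdisj.elim_set hA (hS hA'S) v (bd_subset A hvA) hvA'
  exact Set.mem_biUnion hA'S hvA

end SetSystem

/-- composing line-decompositions.  If `𝒜` is a set of pairwise disjoint
nonempty subsets of `V(G)` with union `W`, each of quasi-bound at most `(a,b)`, and `G[W]`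
has a line-decomposition each of whose bags is the union of at most `k` members of `𝒜`,
then `W` has quasi-line-width at most `((k+1)a, b)`. -/
theorem composeLineDecompositions {V : Type} (G : SimpleGraph V)
    (𝒜 : Set (Set V)) (W : Set V) (a b k : ℕ)
    (hdisj : 𝒜.Pairwise fun A A' => Disjoint A A')
    (hne : ∀ A ∈ 𝒜, A.Nonempty)
    (hunion : ⋃₀ 𝒜 = W)
    (hqb : ∀ A ∈ 𝒜, QuasiBound G A a b)
    (hdec : ∃ (T : Type) (_ : LinearOrder T) (B : T → Set V),
      (∀ t, B t ⊆ W) ∧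
      (∀ v ∈ W, ∃ t, v ∈ B t) ∧
      (∀ u v, u ∈ W → v ∈ W → G.Adj u v → ∃ t, u ∈ B t ∧ v ∈ B t) ∧
      (∀ t₁ t₂ t₃ : T, t₁ < t₂ → t₂ < t₃ → B t₁ ∩ B t₃ ⊆ B t₂) ∧
      (∀ t, ∃ S ⊆ 𝒜, S.encard ≤ k ∧ B t = ⋃₀ S)) :
    QuasiLineWidth G W ((k + 1) * a) b := by
  obtain ⟨T, _, B, hsub, hcover, hedge, hconvex, hbags⟩ := hdec
  choose S hS𝒜 hSk hSB using hbags
  have hB : IsLineDecomposition G W B := ⟨hsub, hcover, hedge, hconvex⟩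
  have hW : W ⊆ ⋃ A : 𝒜, (A : Set V) := by rw [← hunion, Set.sUnion_eq_iUnion]
  have hanchor : ∀ A : 𝒜, ∃ t, (A : Set V) ⊆ B t := by
    rintro ⟨A, hA⟩
    obtain ⟨v, hv⟩ := hne A hA
    obtain ⟨t, hvt⟩ := hcover v (hunion ▸ Set.mem_sUnion_of_mem hv hA)
    exact ⟨t, subset_of_mem_of_eq_sUnion hdisj (hS𝒜 t) (hSB t) hA hv hvt⟩
  have hBbd : ∀ t, QuasiSize G (B t ∩ ⋃ A : 𝒜, bd G A) (k * a) b := fun t => by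
    rw [hSB t, Set.iUnion_subtype]
    exact quasiSize_sUnion_inter_bd hdisj (hS𝒜 t) (hSk t) fun A hA => (hqb A (hS𝒜 t hA)).2
  rw [add_one_mul]
  exact hB.quasiLineWidth_of_parts hBbd hdisj.subtype hW hanchor fun A => (hqb A A.2).1
end
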